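/- Let Z be an n×n complex matrix and ϱ a nonzero complex number with argument θ satisfying |θ| ≤ π/2 (i.e., Re(ϱ) ≥ 0). Write the diagonal entries as z_ii = r_ii e^{iφ_ii} with r_ii = |z_ii|, and let R_i = Σ_{j≠i} |z_ij| be the i-th off-diagonal row sum. If for every i we have r_ii·sin|θ| ≥ R_i and φ_ii − 2|θ| > π/2 (interpreting φ_ii as the principal argument of z_ii, lying in the left half-plane), then every eigenvalue of the matrix ϱZ has strictly negative real part. -/

import Mathlib

/-!
By Geršgorin, every eigenvalue `ν` of `Z` lies in a disc `|ν - z| ≤ R` with `z = r e^{iφ}` a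
diagonal entry and `R ≤ r sin |θ|`, so every eigenvalue `ϱ ν` of `ϱ Z` satisfies
`Re (ϱ ν) ≤ |ϱ| r (cos (θ + φ) + sin |θ|)`. The bracket is negative because
`θ + φ` and `π/2 - |θ|` have half-sum in `(π/2, π)` and half-difference in `(0, π/2)`.
-/

open Matrix Complex Finset
open scoped Pointwise

theorem spectrum.inv_mul_mem_of_mem_smul {𝕜 A : Type*} [Field 𝕜] [Ring A] [Algebra 𝕜 A]
    {k : 𝕜} (hk : k ≠ 0) {a : A} {μ : 𝕜} (hμ : μ ∈ spectrum 𝕜 (k • a)) :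
    k⁻¹ * μ ∈ spectrum 𝕜 a := by
  have hunit : spectrum 𝕜 (k • a) = Units.mk0 k hk • spectrum 𝕜 a :=
    spectrum.unit_smul_eq_smul a (Units.mk0 k hk)
  rw [hunit, Set.mem_smul_set_iff_inv_smul_mem] at hμ
  simpa [Units.smul_def] using hμ

theorem Matrix.exists_norm_sub_diag_le_of_mem_spectrum {K ι : Type*} [NormedField K]
    [Fintype ι] [DecidableEq ι] {A : Matrix ι ι K} {μ : K} (hμ : μ ∈ spectrum K A) :
    ∃ k, ‖μ - A k k‖ ≤ ∑ j ∈ univ \ {k}, ‖A k j‖ := by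
  rw [← Matrix.spectrum_toLin', ← Module.End.hasEigenvalue_iff_mem_spectrum] at hμ
  obtain ⟨k, hk⟩ := eigenvalue_mem_ball hμ
  exact ⟨k, by simpa [sdiff_singleton_eq_erase, dist_eq_norm] using hk⟩

theorem Complex.re_mul_eq_norm_mul_norm_mul_cos_arg_add (w z : ℂ) :
    (w * z).re = ‖w‖ * ‖z‖ * Real.cos (w.arg + z.arg) := by
  rw [Real.cos_add, mul_re, ← norm_mul_cos_arg w, ← norm_mul_cos_arg z,
    ← norm_mul_sin_arg w, ← norm_mul_sin_arg z]
  ring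

theorem Real.cos_add_add_sin_abs_neg {θ φ : ℝ} (hφ : Real.pi / 2 + 2 * |θ| < φ)
    (hφπ : φ ≤ Real.pi) : Real.cos (θ + φ) + Real.sin |θ| < 0 := by
  have hθ_bounds := abs_le.mp (le_refl |θ|)
  rw [← Real.cos_pi_div_two_sub |θ|, Real.cos_add_cos]
  have hsum : Real.cos ((θ + φ + (Real.pi / 2 - |θ|)) / 2) < 0 :=
    Real.cos_neg_of_pi_div_two_lt_of_lt (by linarith) (by linarith [Real.pi_pos])
  have hdiff : 0 < Real.cos ((θ + φ - (Real.pi / 2 - |θ|)) / 2) :=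
    Real.cos_pos_of_mem_Ioo ⟨by linarith [Real.pi_pos], by linarith⟩
  nlinarith

theorem Complex.re_mul_neg_of_norm_sub_le {ϱ z ν : ℂ} (hϱ : ϱ ≠ 0)
    (hν : ‖ν - z‖ ≤ ‖z‖ * Real.sin |ϱ.arg|) (hz : Real.pi / 2 + 2 * |ϱ.arg| < z.arg) :
    (ϱ * ν).re < 0 := by
  have hz0 : z ≠ 0 := by
    rintro rfl
    simp only [arg_zero] at hz
    linarith [Real.pi_pos, abs_nonneg ϱ.arg]
  have hshift : (ϱ * (ν - z)).re ≤ ‖ϱ‖ * (‖z‖ * Real.sin |ϱ.arg|) := by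
    calc (ϱ * (ν - z)).re ≤ ‖ϱ * (ν - z)‖ := re_le_norm _
      _ = ‖ϱ‖ * ‖ν - z‖ := norm_mul _ _
      _ ≤ _ := mul_le_mul_of_nonneg_left hν (norm_nonneg _)
  calc (ϱ * ν).re = (ϱ * z).re + (ϱ * (ν - z)).re := by rw [← add_re]; ring_nf
    _ ≤ ‖ϱ‖ * ‖z‖ * (Real.cos (ϱ.arg + z.arg) + Real.sin |ϱ.arg|) := by
        rw [re_mul_eq_norm_mul_norm_mul_cos_arg_add]
        linarith
    _ < 0 := mul_neg_of_pos_of_neg (by positivity)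
        (Real.cos_add_add_sin_abs_neg hz (arg_le_pi z))

theorem stmt0_general {n : ℕ} (Z : Matrix (Fin n) (Fin n) ℂ) (ϱ : ℂ)
    (hϱ0 : ϱ ≠ 0)
    (θ : ℝ) (hθ : θ = ϱ.arg)
    (R : Fin n → ℝ) (hR : ∀ i, R i = ∑ j ∈ univ \ {i}, ‖Z i j‖)
    (h1 : ∀ i, ‖Z i i‖ * Real.sin |θ| ≥ R i)
    (h2 : ∀ i, (Z i i).arg - 2 * |θ| > Real.pi / 2) :
    ∀ μ ∈ spectrum ℂ (ϱ • Z), μ.re < 0 := by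
  intro μ hμ
  subst hθ
  obtain ⟨i, hi⟩ :=
    exists_norm_sub_diag_le_of_mem_spectrum (spectrum.inv_mul_mem_of_mem_smul hϱ0 hμ)
  have hdisc : ‖ϱ⁻¹ * μ - Z i i‖ ≤ ‖Z i i‖ * Real.sin |ϱ.arg| := (hR i ▸ hi).trans (h1 i)
  have hμ_eq : μ = ϱ * (ϱ⁻¹ * μ) := (mul_inv_cancel_left₀ hϱ0 μ).symm
  rw [hμ_eq]
  exact re_mul_neg_of_norm_sub_le hϱ0 hdisc (by linarith [h2 i])

/-- If all Geršgorin discs of `Z` lie in the left half-plane with the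
diagonal entries `z_ii = r_ii e^{i φ_ii}` satisfying `r_ii sin|θ| ≥ R_i` and
`φ_ii - 2|θ| > π/2` (θ the argument of ϱ, Re ϱ ≥ 0, ϱ ≠ 0), then every
eigenvalue of `ϱ Z` has strictly negative real part. -/
theorem stmt0 {n : ℕ} (Z : Matrix (Fin n) (Fin n) ℂ) (ϱ : ℂ)
    (hϱ0 : ϱ ≠ 0) (hϱre : 0 ≤ ϱ.re)
    (θ : ℝ) (hθ : θ = ϱ.arg)
    (R : Fin n → ℝ) (hR : ∀ i, R i = ∑ j ∈ univ \ {i}, ‖Z i j‖)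
    (hdiag : ∀ i, (Z i i).re < 0)
    (h1 : ∀ i, ‖Z i i‖ * Real.sin |θ| ≥ R i)
    (h2 : ∀ i, (Z i i).arg - 2 * |θ| > Real.pi / 2) :
    ∀ μ ∈ spectrum ℂ (ϱ • Z), μ.re < 0 :=
  stmt0_general Z ϱ hϱ0 θ hθ R hR h1 h2
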